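/- The Wilcoxon signed-rank statistic admits the Walsh-average representation: for real numbers y_1,...,y_n with distinct absolute values and no zeros, \sum_{i=1}^n R_i 1(y_i > 0) = \sum_{1 \le j \le k \le n} 1(y_j + y_k > 0), where R_i is the rank of |y_i| among |y_1|,...,|y_n|. -/

import Mathlib

/-!
Both sides count pairs of indices. The left side counts ordered pairs `(i, l)` with
`|y l| ≤ |y i|` and `0 < y i`. As `|y l| < |y i|` unless `l = i`, the sign of `y i + y l` is
that of `y i`, so it equally counts the pairs with `|y l| ≤ |y i|` and `0 < y i + y l`.
Re-sorting each pair by index instead of by absolute value is a bijection onto the pairs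
`j ≤ k`, because both orders are linear and `|y|` is injective; the summand is symmetric.
-/

open Finset

theorem add_pos_iff_of_abs_lt {α : Type*} [AddCommGroup α] [LinearOrder α]
    [IsOrderedAddMonoid α] {a b : α} (h : |b| < |a|) : 0 < a + b ↔ 0 < a := by
  rw [abs_lt] at h
  rcases le_or_gt a 0 with ha | ha
  · rw [abs_of_nonpos ha] at h
    exact iff_of_false (lt_neg_iff_add_neg'.mp h.2).not_gt ha.not_gt
  · rw [abs_of_pos ha] at h
    exact iff_of_true (neg_lt_iff_pos_add'.mp h.1) ha

theorem sum_sum_filter_le_eq_sum_sum_Ici {ι β M : Type*} [Fintype ι] [LinearOrder ι]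
    [LocallyFiniteOrderTop ι] [LinearOrder β] [AddCommMonoid M] {g : ι → β}
    (hg : Function.Injective g) {f : ι → ι → M} (hf : ∀ i j, f i j = f j i) :
    ∑ i, ∑ l with g l ≤ g i, f i l = ∑ j, ∑ k ∈ Ici j, f j k := by
  rw [← sum_finset_product' {p : ι × ι | g p.2 ≤ g p.1} univ _ (by simp),
    ← sum_finset_product' {p : ι × ι | p.1 ≤ p.2} univ Ici (by simp)]
  refine sum_nbij' (fun p => (min p.1 p.2, max p.1 p.2))
    (fun p => if g p.2 ≤ g p.1 then p else p.swap) ?_ ?_ ?_ ?_ ?_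
  · simp
  · rintro ⟨j, k⟩ -
    split_ifs with h
    · simpa using h
    · simpa using (not_le.mp h).le
  · rintro ⟨i, l⟩ hil
    simp only [mem_filter, mem_univ, true_and] at hil
    rcases le_total i l with h | h
    · simp [min_eq_left h, max_eq_right h, hil]
    · simp only [min_eq_right h, max_eq_left h, Prod.swap_prod_mk]
      split_ifs with h'
      · simp [hg (le_antisymm hil h')]
      · rfl
  · rintro ⟨j, k⟩ hjk
    simp only [mem_filter, mem_univ, true_and] at hjk
    split_ifs <;> simp [hjk]
  · rintro ⟨i, l⟩ -
    rcases le_total i l with h | h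
    · simp [min_eq_left h, max_eq_right h]
    · simp [min_eq_right h, max_eq_left h, hf i l]

theorem walsh_average_representation_general
    (n : ℕ) (y : Fin n → ℝ)
    (habs : ∀ i j, i ≠ j → |y i| ≠ |y j|) :
    ∑ i : Fin n,
        (Finset.univ.filter (fun l : Fin n => |y l| ≤ |y i|)).card *
          (if 0 < y i then 1 else 0)
      = ∑ j : Fin n, ∑ k ∈ Finset.Ici j, (if 0 < y j + y k then 1 else 0) := by
  have habs_inj : Function.Injective fun i => |y i| :=
    fun i j h => by_contra fun hne => habs i j hne h
  calc _ = ∑ i, ∑ l with |y l| ≤ |y i|, if 0 < y i + y l then 1 else 0 := by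
        refine sum_congr rfl fun i _ => ?_
        rw [← smul_eq_mul, ← sum_const]
        refine sum_congr rfl fun l hl => if_congr ?_ rfl rfl
        obtain rfl | hne := eq_or_ne l i
        · exact pos_add_self_iff.symm
        · exact (add_pos_iff_of_abs_lt ((mem_filter.mp hl).2.lt_of_ne (habs l i hne))).symm
    _ = _ := sum_sum_filter_le_eq_sum_sum_Ici habs_inj fun j k => by rw [add_comm]

/-- Walsh-average representation of the Wilcoxon signed-rank statistic: for nonzero
reals `y_1,...,y_n` with pairwise distinct absolute values and `y_j + y_k ≠ 0` for
all `j, k`, we have `∑_i R_i · 1(y_i > 0) = #{(j,k) : j ≤ k, y_j + y_k > 0}`,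
where `R_i = #{l : |y_l| ≤ |y_i|}`. -/
theorem walsh_average_representation
    (n : ℕ) (y : Fin n → ℝ)
    (hnz : ∀ i, y i ≠ 0)
    (habs : ∀ i j, i ≠ j → |y i| ≠ |y j|)
    (hsum : ∀ j k, y j + y k ≠ 0) :
    ∑ i : Fin n,
        (Finset.univ.filter (fun l : Fin n => |y l| ≤ |y i|)).card *
          (if 0 < y i then 1 else 0)
      = ∑ j : Fin n, ∑ k ∈ Finset.Ici j, (if 0 < y j + y k then 1 else 0) :=
  walsh_average_representation_general n y habs
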